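/- arXiv:2302.12209 — 6 statements merged into one kernel-verified Lean document; each statement's English description precedes it below -/
import Mathlib

section
/- Let η be the Minkowski bilinear form on ℝ⁴. For any three pairwise distinct points P, Q, R in ℝ⁴, if η(P-Q, P-Q) = 0, η(P-R, P-R) = 0 and η(Q-R, Q-R) = 0, then P, Q, R are collinear, i.e. R - P is a scalar multiple of Q - P. -/
/-- The Minkowski bilinear form on ℝ⁴. -/
def minkowski (a b : Fin 4 → ℝ) : ℝ :=
  -(a 0 * b 0) + a 1 * b 1 + a 2 * b 2 + a 3 * b 3

lemma sq3_zero {x y z : ℝ} (h : x^2 + y^2 + z^2 = 0) : x = 0 ∧ y = 0 ∧ z = 0 := by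
  refine ⟨?_, ?_, ?_⟩ <;>
    · rw [← pow_eq_zero_iff (n := 2) two_ne_zero]
      nlinarith [sq_nonneg x, sq_nonneg y, sq_nonneg z]

set_option maxHeartbeats 1000000 in
theorem stmt_1 (P Q R : Fin 4 → ℝ)
    (hPQ' : P ≠ Q) (hPR' : P ≠ R) (hQR' : Q ≠ R)
    (hPQ : minkowski (P - Q) (P - Q) = 0)
    (hPR : minkowski (P - R) (P - R) = 0)
    (hQR : minkowski (Q - R) (Q - R) = 0) :
    ∃ c : ℝ, R - P = c • (Q - P) := by
  simp only [minkowski, Pi.sub_apply] at hPQ hPR hQR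
  have hA : (Q 1 - P 1)^2 + (Q 2 - P 2)^2 + (Q 3 - P 3)^2 = (Q 0 - P 0)^2 := by
    linear_combination hPQ
  have hB : (R 1 - P 1)^2 + (R 2 - P 2)^2 + (R 3 - P 3)^2 = (R 0 - P 0)^2 := by
    linear_combination hPR
  have hC : (Q 1 - P 1)*(R 1 - P 1) + (Q 2 - P 2)*(R 2 - P 2) + (Q 3 - P 3)*(R 3 - P 3)
      = (Q 0 - P 0)*(R 0 - P 0) := by
    linear_combination (hPQ + hPR - hQR)/2
  by_cases h0 : Q 0 - P 0 = 0
  · exfalso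
    apply hPQ'
    have e0 : P 0 = Q 0 := by linarith
    have e1 : P 1 = Q 1 := by nlinarith [sq_nonneg (Q 1 - P 1), sq_nonneg (Q 2 - P 2), sq_nonneg (Q 3 - P 3)]
    have e2 : P 2 = Q 2 := by nlinarith [sq_nonneg (Q 1 - P 1), sq_nonneg (Q 2 - P 2), sq_nonneg (Q 3 - P 3)]
    have e3 : P 3 = Q 3 := by nlinarith [sq_nonneg (Q 1 - P 1), sq_nonneg (Q 2 - P 2), sq_nonneg (Q 3 - P 3)]
    funext i
    fin_cases i
    · exact e0
    · exact e1
    · exact e2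
    · exact e3
  · refine ⟨(R 0 - P 0) / (Q 0 - P 0), ?_⟩
    have key : ((Q 0 - P 0)*(R 1 - P 1) - (R 0 - P 0)*(Q 1 - P 1))^2
        + ((Q 0 - P 0)*(R 2 - P 2) - (R 0 - P 0)*(Q 2 - P 2))^2
        + ((Q 0 - P 0)*(R 3 - P 3) - (R 0 - P 0)*(Q 3 - P 3))^2 = 0 := by
      linear_combination (Q 0 - P 0)^2*hB + (R 0 - P 0)^2*hA - 2*(Q 0 - P 0)*(R 0 - P 0)*hC
    obtain ⟨k1, k2, k3⟩ := sq3_zero key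
    have e0 : R 0 - P 0 = (R 0 - P 0) / (Q 0 - P 0) * (Q 0 - P 0) := by field_simp
    have e1 : R 1 - P 1 = (R 0 - P 0) / (Q 0 - P 0) * (Q 1 - P 1) := by
      field_simp; linarith
    have e2 : R 2 - P 2 = (R 0 - P 0) / (Q 0 - P 0) * (Q 2 - P 2) := by
      field_simp; linarith
    have e3 : R 3 - P 3 = (R 0 - P 0) / (Q 0 - P 0) * (Q 3 - P 3) := by
      field_simp; linarith
    funext i
    fin_cases i
    · exact e0
    · exact e1
    · exact e2
    · exact e3
end

section
/- Let η be the Minkowski bilinear form on ℝ⁴. Suppose P, Q, R are pairwise distinct and collinear points of ℝ⁴, and S is a point with η(P-S,P-S) = 0, η(Q-S,Q-S) = 0 and η(R-S,R-S) = 0. Then the common line of P, Q, R is lightlike; in particular η(P-Q,P-Q) = 0, η(P-R,P-R) = 0 and η(Q-R,Q-R) = 0. -/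
theorem stmt_2 (P Q R S : Fin 4 → ℝ)
    (hPQ' : P ≠ Q) (hPR' : P ≠ R) (hQR' : Q ≠ R)
    (hcol : Collinear ℝ ({P, Q, R} : Set (Fin 4 → ℝ)))
    (hPS : minkowski (P - S) (P - S) = 0)
    (hQS : minkowski (Q - S) (Q - S) = 0)
    (hRS : minkowski (R - S) (R - S) = 0) :
    minkowski (P - Q) (P - Q) = 0 ∧
    minkowski (P - R) (P - R) = 0 ∧
    minkowski (Q - R) (Q - R) = 0 := by
  have hPmem : P ∈ ({P, Q, R} : Set (Fin 4 → ℝ)) := by simp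
  rw [collinear_iff_of_mem hPmem] at hcol
  obtain ⟨v, hv⟩ := hcol
  obtain ⟨a, ha⟩ := hv Q (by simp)
  obtain ⟨b, hb⟩ := hv R (by simp)
  set u := P - S with hu
  have key : ∀ c : ℝ, minkowski (u + c • v) (u + c • v)
      = minkowski u u + 2 * c * minkowski u v + c ^ 2 * minkowski v v := by
    intro c
    simp only [minkowski, Pi.add_apply, Pi.smul_apply, smul_eq_mul]
    ring
  have hQu : Q - S = u + a • v := by rw [ha, hu]; simp only [vadd_eq_add]; abel
  have hRu : R - S = u + b • v := by rw [hb, hu]; simp only [vadd_eq_add]; abel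
  rw [hQu, key] at hQS
  rw [hRu, key] at hRS
  rw [hPS] at hQS hRS
  have hab : a ≠ b := by
    intro h; apply hQR'; rw [ha, hb, h]
  have ha0 : a ≠ 0 := by
    intro h; apply hPQ'; rw [ha, h]; simp
  have hb0 : b ≠ 0 := by
    intro h; apply hPR'; rw [hb, h]; simp
  have hvv : minkowski v v = 0 := by
    have h1 : 2 * minkowski u v + a * minkowski v v = 0 := by
      have := mul_left_cancel₀ ha0 (by linarith [hQS] : a * (2 * minkowski u v + a * minkowski v v) = a * 0)
      linarith
    have h2 : 2 * minkowski u v + b * minkowski v v = 0 := by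
      have := mul_left_cancel₀ hb0 (by linarith [hRS] : b * (2 * minkowski u v + b * minkowski v v) = b * 0)
      linarith
    have : (a - b) * minkowski v v = 0 := by linarith
    rcases mul_eq_zero.mp this with h | h
    · exact absurd (by linarith : a = b) hab
    · exact h
  have keyc : ∀ c : ℝ, minkowski (c • v) (c • v) = c ^ 2 * minkowski v v := by
    intro c
    simp only [minkowski, Pi.smul_apply, smul_eq_mul]
    ring
  refine ⟨?_, ?_, ?_⟩
  · have : P - Q = (-a) • v := by rw [ha]; ext i; simp [vadd_eq_add, neg_mul]
    rw [this, keyc, hvv]; ring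
  · have : P - R = (-b) • v := by rw [hb]; ext i; simp [vadd_eq_add, neg_mul]
    rw [this, keyc, hvv]; ring
  · have : Q - R = (a - b) • v := by rw [ha, hb]; ext i; simp [vadd_eq_add, sub_mul]
    rw [this, keyc, hvv]; ring
end

section
/- In ℝ⁴ with the Minkowski form η, for any eight pairwise distinct points A, B, C, D, E, F, G, H: if the fifteen relations η(X-Y, X-Y) = 0 hold for all pairs (X,Y) with X ∈ {A,B,C,D}, Y ∈ {E,F,G,H}, except possibly the pair (D,H), then also η(D-H, D-H) = 0. -/
open Matrix Submodule

section DotProduct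

variable {R n : Type*} [Fintype n]

theorem dotProduct_eq_zero_of_mem_span [CommSemiring R] {s : Set (n → R)} {x y : n → R}
    (hx : x ∈ span R s) (h : ∀ u ∈ s, u ⬝ᵥ y = 0) : x ⬝ᵥ y = 0 := by
  induction hx using Submodule.span_induction with
  | mem u hu => exact h u hu
  | zero => exact zero_dotProduct y
  | add u v _ _ hu hv => rw [add_dotProduct, hu, hv, add_zero]
  | smul a u _ hu => rw [smul_dotProduct, hu, smul_zero]

variable [Field R] [LinearOrder R] [IsStrictOrderedRing R]

theorem disjoint_span_of_dotProduct_eq_zero {s t : Set (n → R)}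
    (h : ∀ u ∈ s, ∀ v ∈ t, u ⬝ᵥ v = 0) : Disjoint (span R s) (span R t) := by
  refine Submodule.disjoint_def.2 fun x hs ht => dotProduct_self_eq_zero.1 ?_
  refine dotProduct_eq_zero_of_mem_span hs fun u hu => ?_
  rw [dotProduct_comm]
  exact dotProduct_eq_zero_of_mem_span ht fun v hv => by rw [dotProduct_comm]; exact h u hu v hv

theorem card_add_card_le_of_dotProduct_eq_zero {ι κ : Type*} [Fintype ι] [Fintype κ]
    {v : ι → n → R} {w : κ → n → R} (hv : LinearIndependent R v) (hw : LinearIndependent R w)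
    (h : ∀ i j, v i ⬝ᵥ w j = 0) : Fintype.card ι + Fintype.card κ ≤ Fintype.card n := by
  have hvw := hv.sum_type hw <| disjoint_span_of_dotProduct_eq_zero <| by
    rintro _ ⟨i, rfl⟩ _ ⟨j, rfl⟩
    exact h i j
  simpa using hvw.fintype_card_le_finrank

end DotProduct

theorem eq_zero_of_sq_add_sq_add_sq_eq_zero {a b c : ℝ} (h : a ^ 2 + b ^ 2 + c ^ 2 = 0) :
    a = 0 ∧ b = 0 ∧ c = 0 := by
  obtain ⟨hab, hc⟩ := (add_eq_zero_iff_of_nonneg (by positivity) (by positivity)).1 h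
  obtain ⟨ha, hb⟩ := (add_eq_zero_iff_of_nonneg (by positivity) (by positivity)).1 hab
  exact ⟨pow_eq_zero_iff two_ne_zero |>.1 ha, pow_eq_zero_iff two_ne_zero |>.1 hb,
    pow_eq_zero_iff two_ne_zero |>.1 hc⟩

theorem minkowski_sub_smul_self (u n : Fin 4 → ℝ) (t : ℝ) :
    minkowski (u - t • n) (u - t • n)
      = minkowski u u - 2 * t * minkowski u n + t ^ 2 * minkowski n n := by
  simp only [minkowski, Pi.sub_apply, Pi.smul_apply, smul_eq_mul]
  ring

theorem exists_eq_smul_of_minkowski_eq_zero {n u : Fin 4 → ℝ} (hn0 : n ≠ 0)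
    (hn : minkowski n n = 0) (hu : minkowski u u = 0) (hun : minkowski u n = 0) :
    ∃ t : ℝ, u = t • n := by
  simp only [minkowski] at hn hu hun
  have hn₀ : n 0 ≠ 0 := by
    contrapose! hn0
    obtain ⟨h1, h2, h3⟩ := eq_zero_of_sq_add_sq_add_sq_eq_zero (a := n 1) (b := n 2) (c := n 3)
      (by rw [hn0] at hn; linear_combination hn)
    ext i
    fin_cases i <;> assumption
  -- Lagrange's identity
  obtain ⟨h1, h2, h3⟩ := eq_zero_of_sq_add_sq_add_sq_eq_zero
    (a := n 0 * u 1 - u 0 * n 1) (b := n 0 * u 2 - u 0 * n 2) (c := n 0 * u 3 - u 0 * n 3)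
    (by linear_combination n 0 ^ 2 * hu + u 0 ^ 2 * hn - 2 * n 0 * u 0 * hun)
  refine ⟨u 0 / n 0, funext fun i => ?_⟩
  fin_cases i <;> simp only [Fin.zero_eta, Fin.mk_one, Fin.reduceFinMk, Fin.isValue, Pi.smul_apply,
    smul_eq_mul] <;> field_simp <;> linarith

def Lightlike (X Y : Fin 4 → ℝ) : Prop := minkowski (X - Y) (X - Y) = 0

theorem minkowski_sub_comm (X Y : Fin 4 → ℝ) :
    minkowski (X - Y) (X - Y) = minkowski (Y - X) (Y - X) := by
  simp only [minkowski, Pi.sub_apply]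
  ring

namespace Lightlike

variable {P Q W X Y Z : Fin 4 → ℝ}

theorem symm (h : Lightlike X Y) : Lightlike Y X := by
  rwa [Lightlike, minkowski_sub_comm]

theorem exists_eq_add_smul (hPQ : P ≠ Q) (hPQl : Lightlike P Q) (hPX : Lightlike P X)
    (hQX : Lightlike Q X) : ∃ t : ℝ, X = P + t • (Q - P) := by
  have hn : minkowski (Q - P) (Q - P) = 0 := hPQl.symm
  have hu : minkowski (X - P) (X - P) = 0 := hPX.symm
  have hun : minkowski (X - P) (Q - P) = 0 := by
    have h := minkowski_sub_smul_self (X - P) (Q - P) 1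
    rw [one_smul, sub_sub_sub_cancel_right, minkowski_sub_comm, hQX, hu, hn] at h
    linarith
  obtain ⟨t, ht⟩ := exists_eq_smul_of_minkowski_eq_zero (sub_ne_zero.2 hPQ.symm) hn hu hun
  exact ⟨t, eq_add_of_sub_eq' ht⟩

theorem of_add_smul {n : Fin 4 → ℝ} {s t : ℝ} (hn : minkowski n n = 0) (hst : s ≠ t)
    (hs : Lightlike W (P + s • n)) (ht : Lightlike W (P + t • n)) (r : ℝ) :
    Lightlike W (P + r • n) := by
  simp only [Lightlike, sub_add_eq_sub_sub, minkowski_sub_smul_self, hn, mul_zero,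
    add_zero] at hs ht ⊢
  have hWn : minkowski (W - P) n = 0 := by
    refine (mul_eq_zero.1 (?_ : (s - t) * minkowski (W - P) n = 0)).resolve_left
      (sub_ne_zero.2 hst)
    linear_combination (ht - hs) / 2
  rw [hWn] at hs ⊢
  linarith

theorem of_null_line (hPQ : P ≠ Q) (hPQl : Lightlike P Q) (hXY : X ≠ Y)
    (hPX : Lightlike P X) (hQX : Lightlike Q X) (hPY : Lightlike P Y) (hQY : Lightlike Q Y)
    (hPZ : Lightlike P Z) (hQZ : Lightlike Q Z) (hWX : Lightlike W X) (hWY : Lightlike W Y) :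
    Lightlike W Z := by
  obtain ⟨s, rfl⟩ := exists_eq_add_smul hPQ hPQl hPX hQX
  obtain ⟨t, rfl⟩ := exists_eq_add_smul hPQ hPQl hPY hQY
  obtain ⟨r, rfl⟩ := exists_eq_add_smul hPQ hPQl hPZ hQZ
  exact of_add_smul hPQl.symm (fun h => hXY (by rw [h])) hWX hWY r

end Lightlike

def coneLift (X : Fin 4 → ℝ) : Fin 6 → ℝ := ![1, minkowski X X, X 0, X 1, X 2, X 3]

def coneMatrix : Matrix (Fin 6) (Fin 6) ℝ :=
  !![0, 1, 0, 0, 0, 0;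
     1, 0, 0, 0, 0, 0;
     0, 0, 2, 0, 0, 0;
     0, 0, 0, -2, 0, 0;
     0, 0, 0, 0, -2, 0;
     0, 0, 0, 0, 0, -2]

theorem coneMatrix_mulVec (v : Fin 6 → ℝ) :
    coneMatrix *ᵥ v = ![v 1, v 0, 2 * v 2, -2 * v 3, -2 * v 4, -2 * v 5] := by
  ext i
  fin_cases i <;> simp [coneMatrix, mulVec, dotProduct, Fin.sum_univ_six]

theorem coneLift_dotProduct_coneMatrix_mulVec (X Y : Fin 4 → ℝ) :
    coneLift X ⬝ᵥ coneMatrix *ᵥ coneLift Y = minkowski (X - Y) (X - Y) := by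
  rw [coneMatrix_mulVec, dotProduct, Fin.sum_univ_six]
  simp only [coneLift, minkowski, cons_val, Pi.sub_apply]
  ring

theorem ker_mulVecLin_coneMatrix : LinearMap.ker coneMatrix.mulVecLin = ⊥ := by
  refine ker_mulVecLin_eq_bot_iff.2 fun v hv => ?_
  simp only [coneMatrix_mulVec, cons_eq_zero_iff, mul_eq_zero, neg_eq_zero, two_ne_zero,
    false_or, zero_empty, and_true] at hv
  obtain ⟨h1, h0, h2, h3, h4, h5⟩ := hv
  ext i
  fin_cases i <;> assumption

theorem coneLift_injective : Function.Injective coneLift := by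
  intro X Y h
  ext i
  fin_cases i
  exacts [congrFun h 2, congrFun h 3, congrFun h 4, congrFun h 5]

theorem linearIndependent_coneLift_pair {X Y : Fin 4 → ℝ} (h : X ≠ Y) :
    LinearIndependent ℝ (coneLift ∘ ![X, Y]) := by
  rw [show coneLift ∘ ![X, Y] = ![coneLift X, coneLift Y] from (FinVec.map_eq _ _).symm]
  refine LinearIndependent.pair_iff.2 fun s t hst => ?_
  obtain rfl : t = -s := by
    have h0 := congrFun hst 0
    simp only [coneLift, Pi.add_apply, Pi.smul_apply, cons_val_zero, smul_eq_mul, mul_one,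
      Pi.zero_apply] at h0
    linarith
  rw [neg_smul, ← sub_eq_add_neg, ← smul_sub, smul_eq_zero, sub_eq_zero] at hst
  have hs := hst.resolve_right (coneLift_injective.ne h)
  exact ⟨hs, by rw [hs, neg_zero]⟩

theorem linearIndependent_coneLift_comp_cons {n : ℕ} {X : Fin 4 → ℝ} {P : Fin n → Fin 4 → ℝ} :
    LinearIndependent ℝ (coneLift ∘ Fin.cons X P) ↔
      LinearIndependent ℝ (coneLift ∘ P) ∧ coneLift X ∉ span ℝ (Set.range (coneLift ∘ P)) := by
  rw [Fin.comp_cons]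
  exact linearIndependent_finCons

theorem card_add_card_le_six_of_forall_lightlike {ι κ : Type*} [Fintype ι] [Fintype κ]
    {P : ι → Fin 4 → ℝ} {Q : κ → Fin 4 → ℝ} (hP : LinearIndependent ℝ (coneLift ∘ P))
    (hQ : LinearIndependent ℝ (coneLift ∘ Q)) (h : ∀ i j, Lightlike (P i) (Q j)) :
    Fintype.card ι + Fintype.card κ ≤ 6 := by
  simpa using card_add_card_le_of_dotProduct_eq_zero hP (hQ.map' _ ker_mulVecLin_coneMatrix)
    fun i j => (coneLift_dotProduct_coneMatrix_mulVec _ _).trans (h i j)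

theorem Lightlike.of_coneLift_mem_span {ι : Type*} {P : ι → Fin 4 → ℝ} {D H : Fin 4 → ℝ}
    (hD : coneLift D ∈ span ℝ (Set.range (coneLift ∘ P))) (hH : ∀ i, Lightlike (P i) H) :
    Lightlike D H := by
  rw [Lightlike, ← coneLift_dotProduct_coneMatrix_mulVec]
  refine dotProduct_eq_zero_of_mem_span hD ?_
  rintro _ ⟨i, rfl⟩
  exact (coneLift_dotProduct_coneMatrix_mulVec _ _).trans (hH i)

theorem Lightlike.of_not_linearIndependent_coneLift {X Y Z : Fin 4 → ℝ} (hXY : X ≠ Y)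
    (hXZ : X ≠ Z) (hYZ : Y ≠ Z) (h : ¬ LinearIndependent ℝ (coneLift ∘ ![X, Y, Z])) :
    Lightlike Y Z := by
  have hmem : coneLift X ∈ span ℝ (Set.range (coneLift ∘ ![Y, Z])) := by
    by_contra hX
    exact h (linearIndependent_coneLift_comp_cons.2 ⟨linearIndependent_coneLift_pair hYZ, hX⟩)
  obtain ⟨c, hc⟩ := (mem_span_range_iff_exists_fun ℝ).1 hmem
  simp only [Fin.sum_univ_two, Function.comp_apply, cons_val_zero, cons_val_one] at hc
  have hsum : c 0 + c 1 = 1 := by simpa [coneLift] using congrFun hc 0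
  have hpair : ∀ W, minkowski (X - W) (X - W)
      = c 0 * minkowski (Y - W) (Y - W) + c 1 * minkowski (Z - W) (Z - W) := by
    intro W
    simp only [← coneLift_dotProduct_coneMatrix_mulVec, ← hc, add_dotProduct, smul_dotProduct,
      smul_eq_mul]
  have hc0 : c 0 ≠ 0 := by
    rintro h0
    rw [h0, zero_smul, zero_add, show c 1 = 1 by linarith, one_smul] at hc
    exact hXZ (coneLift_injective hc.symm)
  have hc1 : c 1 ≠ 0 := by
    rintro h1
    rw [h1, zero_smul, add_zero, show c 0 = 1 by linarith, one_smul] at hc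
    exact hXY (coneLift_injective hc.symm)
  have h0 : minkowski 0 0 = 0 := by simp [minkowski]
  have hX := hpair X
  have hY := hpair Y
  have hZ := hpair Z
  rw [sub_self, h0] at hX hY hZ
  rw [minkowski_sub_comm X, minkowski_sub_comm Z] at hY
  rw [minkowski_sub_comm X] at hZ
  have hq : c 0 * c 1 * minkowski (Y - Z) (Y - Z) = 0 := by
    linear_combination (-hX - c 0 * hY - c 1 * hZ) / 2
  exact (mul_eq_zero.1 hq).resolve_left (mul_ne_zero hc0 hc1)

theorem stmt_3 (A B C D E F G H : Fin 4 → ℝ)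
    (hdist : List.Pairwise (· ≠ ·) [A, B, C, D, E, F, G, H])
    (hAE : minkowski (A - E) (A - E) = 0)
    (hAF : minkowski (A - F) (A - F) = 0)
    (hAG : minkowski (A - G) (A - G) = 0)
    (hAH : minkowski (A - H) (A - H) = 0)
    (hBE : minkowski (B - E) (B - E) = 0)
    (hBF : minkowski (B - F) (B - F) = 0)
    (hBG : minkowski (B - G) (B - G) = 0)
    (hBH : minkowski (B - H) (B - H) = 0)
    (hCE : minkowski (C - E) (C - E) = 0)
    (hCF : minkowski (C - F) (C - F) = 0)
    (hCG : minkowski (C - G) (C - G) = 0)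
    (hCH : minkowski (C - H) (C - H) = 0)
    (hDE : minkowski (D - E) (D - E) = 0)
    (hDF : minkowski (D - F) (D - F) = 0)
    (hDG : minkowski (D - G) (D - G) = 0) :
    minkowski (D - H) (D - H) = 0 := by
  simp only [List.pairwise_cons, List.mem_cons, List.not_mem_nil, or_false, forall_eq_or_imp,
    forall_eq] at hdist
  obtain ⟨⟨hAB, hAC, -⟩, ⟨hBC, -⟩, -, -, ⟨hEF, hEG, -⟩, ⟨hFG, -⟩, -⟩ := hdist
  by_cases hD : coneLift D ∈ span ℝ (Set.range (coneLift ∘ ![A, B, C]))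
  · refine Lightlike.of_coneLift_mem_span hD fun i => ?_
    fin_cases i
    exacts [hAH, hBH, hCH]
  by_cases hABC : LinearIndependent ℝ (coneLift ∘ ![A, B, C])
  · by_cases hEFG : LinearIndependent ℝ (coneLift ∘ ![E, F, G])
    · have hDABC := linearIndependent_coneLift_comp_cons.2 ⟨hABC, hD⟩
      have := card_add_card_le_six_of_forall_lightlike hDABC hEFG fun i j => by
        fin_cases i <;> fin_cases j <;> assumption
      simp at this
    have hFG' := Lightlike.of_not_linearIndependent_coneLift hEF hEG hFG hEFG
    open Lightlike in
    exact (of_null_line hFG hFG' hAB (symm hAF) (symm hAG) (symm hBF) (symm hBG) (symm hDF)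
      (symm hDG) (symm hAH) (symm hBH)).symm
  have hBC' := Lightlike.of_not_linearIndependent_coneLift hAB hAC hBC hABC
  exact Lightlike.of_null_line hBC hBC' hEF hBE hCE hBF hCF hBH hCH hDE hDF
end

section
/- Let α, β be 2-dimensional affine planes in Minkowski ℝ⁴ such that every direction vector of α is η-orthogonal to every direction vector of β, and neither α nor β contains a timelike direction vector. Then there exists an affine isometry of Minkowski space (composition of Lorentz transformation and translation) mapping α onto the plane {t - x = 0, z = 0} and β onto a plane {t - x = s, y = 0} for some s ∈ ℝ. -/
lemma minkowski_comm (u v : Fin 4 → ℝ) : minkowski u v = minkowski v u := by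
  unfold minkowski; ring

@[simp] lemma minkowski_add_left (u v w : Fin 4 → ℝ) :
    minkowski (u + v) w = minkowski u w + minkowski v w := by
  simp only [minkowski, Pi.add_apply]; ring

@[simp] lemma minkowski_add_right (u v w : Fin 4 → ℝ) :
    minkowski u (v + w) = minkowski u v + minkowski u w := by
  simp only [minkowski, Pi.add_apply]; ring

@[simp] lemma minkowski_sub_left (u v w : Fin 4 → ℝ) :
    minkowski (u - v) w = minkowski u w - minkowski v w := by
  simp only [minkowski, Pi.sub_apply]; ring

@[simp] lemma minkowski_sub_right (u v w : Fin 4 → ℝ) :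
    minkowski u (v - w) = minkowski u v - minkowski u w := by
  simp only [minkowski, Pi.sub_apply]; ring

@[simp] lemma minkowski_smul_left (c : ℝ) (u v : Fin 4 → ℝ) :
    minkowski (c • u) v = c * minkowski u v := by
  simp only [minkowski, Pi.smul_apply, smul_eq_mul]; ring

@[simp] lemma minkowski_smul_right (c : ℝ) (u v : Fin 4 → ℝ) :
    minkowski u (c • v) = c * minkowski u v := by
  simp only [minkowski, Pi.smul_apply, smul_eq_mul]; ring

lemma eq_zero_of_minkowski_self_eq_zero {v : Fin 4 → ℝ} (hv : minkowski v v = 0) (h0 : v 0 = 0) :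
    v = 0 := by
  unfold minkowski at hv
  rw [h0] at hv
  have h1 : v 1 = 0 := by nlinarith [sq_nonneg (v 1), sq_nonneg (v 2), sq_nonneg (v 3)]
  have h2 : v 2 = 0 := by nlinarith [sq_nonneg (v 1), sq_nonneg (v 2), sq_nonneg (v 3)]
  have h3 : v 3 = 0 := by nlinarith [sq_nonneg (v 1), sq_nonneg (v 2), sq_nonneg (v 3)]
  ext i; fin_cases i <;> assumption

-- Equality case of Cauchy–Schwarz for the spatial parts.
lemma smul_eq_smul_of_null_of_minkowski_eq_zero {u v : Fin 4 → ℝ} (hu : minkowski u u = 0)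
    (hv : minkowski v v = 0) (huv : minkowski u v = 0) : u 0 • v = v 0 • u := by
  unfold minkowski at hu hv huv
  have key : (u 0 * v 1 - v 0 * u 1) ^ 2 + (u 0 * v 2 - v 0 * u 2) ^ 2
      + (u 0 * v 3 - v 0 * u 3) ^ 2 = 0 := by
    linear_combination (u 0 ^ 2) * hv + (v 0 ^ 2) * hu - 2 * u 0 * v 0 * huv
  have h1 : u 0 * v 1 - v 0 * u 1 = 0 := by
    nlinarith [sq_nonneg (u 0 * v 1 - v 0 * u 1), sq_nonneg (u 0 * v 2 - v 0 * u 2),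
      sq_nonneg (u 0 * v 3 - v 0 * u 3)]
  have h2 : u 0 * v 2 - v 0 * u 2 = 0 := by
    nlinarith [sq_nonneg (u 0 * v 1 - v 0 * u 1), sq_nonneg (u 0 * v 2 - v 0 * u 2),
      sq_nonneg (u 0 * v 3 - v 0 * u 3)]
  have h3 : u 0 * v 3 - v 0 * u 3 = 0 := by
    nlinarith [sq_nonneg (u 0 * v 1 - v 0 * u 1), sq_nonneg (u 0 * v 2 - v 0 * u 2),
      sq_nonneg (u 0 * v 3 - v 0 * u 3)]
  ext i; fin_cases i <;> simp <;> linarith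

lemma eq_zero_of_forall_minkowski_eq_zero {u : Fin 4 → ℝ} (h : ∀ v, minkowski u v = 0) : u = 0 := by
  have h0 := h (Pi.single 0 1)
  have h1 := h (Pi.single 1 1)
  have h2 := h (Pi.single 2 1)
  have h3 := h (Pi.single 3 1)
  simp [minkowski] at h0 h1 h2 h3
  ext i; fin_cases i <;> assumption

lemma injective_of_preserves_minkowski (f : (Fin 4 → ℝ) →ₗ[ℝ] (Fin 4 → ℝ))
    (hf : ∀ u v, minkowski (f u) (f v) = minkowski u v) : Function.Injective f := by
  rw [← LinearMap.ker_eq_bot, Submodule.eq_bot_iff]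
  intro u hu
  refine eq_zero_of_forall_minkowski_eq_zero fun v => ?_
  rw [← hf, LinearMap.mem_ker.1 hu]
  simp [minkowski]

lemma sup_ne_top_of_minkowski_orthogonal {U V : Submodule ℝ (Fin 4 → ℝ)}
    (horth : ∀ u ∈ U, ∀ v ∈ V, minkowski u v = 0) (hU : ∀ u ∈ U, ¬ minkowski u u < 0)
    (hV : ∀ v ∈ V, ¬ minkowski v v < 0) : U ⊔ V ≠ ⊤ := by
  intro h
  obtain ⟨u, hu, v, hv, huv⟩ := Submodule.mem_sup.1 (h ▸ Submodule.mem_top : Pi.single 0 1 ∈ U ⊔ V)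
  have hsq : minkowski (u + v) (u + v) = minkowski u u + minkowski v v := by
    rw [minkowski_add_left, minkowski_add_right, minkowski_add_right, horth u hu v hv,
      minkowski_comm v u, horth u hu v hv]
    ring
  have htime : minkowski (Pi.single 0 1) (Pi.single 0 1) = -1 := by simp [minkowski]
  rw [huv, htime] at hsq
  linarith [hU u hu, hV v hv]

lemma Submodule.exists_ne_zero_mem_inf_of_sup_ne_top {K V : Type*} [DivisionRing K]
    [AddCommGroup V] [Module K V] [FiniteDimensional K V] {U W : Submodule K V}
    (hdim : Module.finrank K V ≤ Module.finrank K U + Module.finrank K W) (hsup : U ⊔ W ≠ ⊤) :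
    ∃ x ∈ U ⊓ W, x ≠ 0 := by
  have hlt := Submodule.finrank_lt hsup
  have := Submodule.finrank_sup_add_finrank_inf_eq U W
  exact Submodule.exists_mem_ne_zero_of_ne_bot (Submodule.one_le_finrank_iff.1 (by omega))

lemma exists_minkowski_self_eq_one {W : Submodule ℝ (Fin 4 → ℝ)} (hW : 1 < Module.finrank ℝ W)
    {n : Fin 4 → ℝ} (hn : n ≠ 0) (hnn : minkowski n n = 0)
    (hWn : ∀ u ∈ W, minkowski u n = 0) (hWnt : ∀ u ∈ W, ¬ minkowski u u < 0) :
    ∃ a ∈ W, minkowski a a = 1 := by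
  obtain ⟨v, hvW, hvn⟩ : ∃ v ∈ W, v ∉ Submodule.span ℝ {n} := by
    by_contra! h
    have := Submodule.finrank_mono (show W ≤ Submodule.span ℝ {n} from h)
    rw [finrank_span_singleton hn] at this
    omega
  have hvv : 0 < minkowski v v := by
    refine lt_of_le_of_ne (not_lt.1 (hWnt v hvW)) fun hvv => hvn ?_
    have hn0 : n 0 ≠ 0 := fun h0 => hn (eq_zero_of_minkowski_self_eq_zero hnn h0)
    have hpar := smul_eq_smul_of_null_of_minkowski_eq_zero hnn hvv.symm
      (minkowski_comm n v ▸ hWn v hvW)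
    rw [← inv_smul_smul₀ hn0 v, hpar]
    exact Submodule.smul_mem _ _ (Submodule.smul_mem _ _ (Submodule.mem_span_singleton_self n))
  refine ⟨(√(minkowski v v))⁻¹ • v, Submodule.smul_mem _ _ hvW, ?_⟩
  rw [minkowski_smul_left, minkowski_smul_right, ← mul_assoc, ← mul_inv, Real.mul_self_sqrt hvv.le,
    inv_mul_cancel₀ hvv.ne']

lemma image_linearEquiv_add_neg_apply {R V : Type*} [Ring R] [AddCommGroup V] [Module R V]
    (Λ : V ≃ₗ[R] V) (P : V) (S : Set V) : (fun x => Λ x + -Λ P) '' S = {p | Λ.symm p + P ∈ S} := by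
  ext p
  constructor
  · rintro ⟨x, hx, rfl⟩
    simpa using hx
  · intro hp
    exact ⟨_, hp, by simp⟩

/-- `n`, `m`, `a`, `b` play the roles of `e₀ + e₁`, `e₀ - e₁`, `e₂`, `e₃`. -/
structure NullFrame where
  (n m a b : Fin 4 → ℝ)
  n_n : minkowski n n = 0
  m_m : minkowski m m = 0
  n_m : minkowski n m = -2
  a_a : minkowski a a = 1
  b_b : minkowski b b = 1
  a_b : minkowski a b = 0
  n_a : minkowski n a = 0
  n_b : minkowski n b = 0
  m_a : minkowski m a = 0
  m_b : minkowski m b = 0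

namespace NullFrame

variable (F : NullFrame)

attribute [simp] n_n m_m n_m a_a b_b a_b n_a n_b m_a m_b

@[simp] lemma m_n : minkowski F.m F.n = -2 := minkowski_comm F.n F.m ▸ F.n_m
@[simp] lemma b_a : minkowski F.b F.a = 0 := minkowski_comm F.a F.b ▸ F.a_b
@[simp] lemma a_n : minkowski F.a F.n = 0 := minkowski_comm F.n F.a ▸ F.n_a
@[simp] lemma b_n : minkowski F.b F.n = 0 := minkowski_comm F.n F.b ▸ F.n_b
@[simp] lemma a_m : minkowski F.a F.m = 0 := minkowski_comm F.m F.a ▸ F.m_a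
@[simp] lemma b_m : minkowski F.b F.m = 0 := minkowski_comm F.m F.b ▸ F.m_b

noncomputable def toLin : (Fin 4 → ℝ) →ₗ[ℝ] (Fin 4 → ℝ) where
  toFun x := ((x 0 + x 1) / 2) • F.n + ((x 0 - x 1) / 2) • F.m + x 2 • F.a + x 3 • F.b
  map_add' x y := by
    ext i
    simp only [Pi.add_apply, Pi.smul_apply, smul_eq_mul]
    ring
  map_smul' c x := by
    ext i
    simp only [Pi.add_apply, Pi.smul_apply, smul_eq_mul, RingHom.id_apply]
    ring

lemma toLin_apply (x : Fin 4 → ℝ) :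
    F.toLin x = ((x 0 + x 1) / 2) • F.n + ((x 0 - x 1) / 2) • F.m + x 2 • F.a + x 3 • F.b := rfl

@[simp] lemma minkowski_toLin_n (x : Fin 4 → ℝ) : minkowski (F.toLin x) F.n = x 1 - x 0 := by
  simp [toLin_apply]

@[simp] lemma minkowski_toLin_m (x : Fin 4 → ℝ) : minkowski (F.toLin x) F.m = -(x 0 + x 1) := by
  simp [toLin_apply]

@[simp] lemma minkowski_toLin_a (x : Fin 4 → ℝ) : minkowski (F.toLin x) F.a = x 2 := by
  simp [toLin_apply]

@[simp] lemma minkowski_toLin_b (x : Fin 4 → ℝ) : minkowski (F.toLin x) F.b = x 3 := by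
  simp [toLin_apply]

lemma minkowski_toLin (x y : Fin 4 → ℝ) : minkowski (F.toLin x) (F.toLin y) = minkowski x y := by
  conv_lhs => rw [toLin_apply F y]
  simp only [minkowski_add_right, minkowski_smul_right, minkowski_toLin_n, minkowski_toLin_m,
    minkowski_toLin_a, minkowski_toLin_b]
  unfold minkowski
  ring

lemma toLin_surjective : Function.Surjective F.toLin :=
  LinearMap.injective_iff_surjective.1 (injective_of_preserves_minkowski _ F.minkowski_toLin)

noncomputable def equiv : (Fin 4 → ℝ) ≃ₗ[ℝ] (Fin 4 → ℝ) :=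
  LinearEquiv.ofInjectiveEndo F.toLin (injective_of_preserves_minkowski _ F.minkowski_toLin)

@[simp] lemma equiv_apply (x : Fin 4 → ℝ) : F.equiv x = F.toLin x := rfl

lemma minkowski_equiv_symm (u v : Fin 4 → ℝ) :
    minkowski (F.equiv.symm u) (F.equiv.symm v) = minkowski u v := by
  rw [← F.minkowski_toLin, ← equiv_apply, ← equiv_apply, LinearEquiv.apply_symm_apply,
    LinearEquiv.apply_symm_apply]

lemma mem_span_n_a_iff (v : Fin 4 → ℝ) :
    v ∈ Submodule.span ℝ {F.n, F.a} ↔ minkowski v F.n = 0 ∧ minkowski v F.b = 0 := by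
  constructor
  · intro hv
    obtain ⟨c, d, rfl⟩ := Submodule.mem_span_pair.1 hv
    simp
  · rintro ⟨hn, hb⟩
    obtain ⟨x, rfl⟩ := F.toLin_surjective v
    rw [minkowski_toLin_n, sub_eq_zero] at hn
    rw [minkowski_toLin_b] at hb
    exact Submodule.mem_span_pair.2 ⟨(x 0 + x 1) / 2, x 2, by simp [toLin_apply, hn, hb]⟩

lemma mem_span_n_b_iff (v : Fin 4 → ℝ) :
    v ∈ Submodule.span ℝ {F.n, F.b} ↔ minkowski v F.n = 0 ∧ minkowski v F.a = 0 := by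
  constructor
  · intro hv
    obtain ⟨c, d, rfl⟩ := Submodule.mem_span_pair.1 hv
    simp
  · rintro ⟨hn, ha⟩
    obtain ⟨x, rfl⟩ := F.toLin_surjective v
    rw [minkowski_toLin_n, sub_eq_zero] at hn
    rw [minkowski_toLin_a] at ha
    exact Submodule.mem_span_pair.2 ⟨(x 0 + x 1) / 2, x 3, by simp [toLin_apply, hn, ha]⟩

lemma image_of_direction_eq_span_n_a {α : AffineSubspace ℝ (Fin 4 → ℝ)}
    (hα : α.direction = Submodule.span ℝ {F.n, F.a}) {P : Fin 4 → ℝ} (hP : P ∈ α) :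
    (fun x => F.equiv.symm x + -F.equiv.symm P) '' α = {p | p 0 - p 1 = 0 ∧ p 3 = 0} := by
  rw [image_linearEquiv_add_neg_apply]
  ext p
  simp only [Set.mem_ofPred_eq, LinearEquiv.symm_symm, SetLike.mem_coe]
  rw [← vadd_eq_add, AffineSubspace.vadd_mem_iff_mem_direction _ hP, hα, mem_span_n_a_iff,
    F.equiv_apply, F.minkowski_toLin_n, F.minkowski_toLin_b, ← neg_sub, neg_eq_zero]

lemma image_of_direction_eq_span_n_b {β : AffineSubspace ℝ (Fin 4 → ℝ)}
    (hβ : β.direction = Submodule.span ℝ {F.n, F.b}) {P Q : Fin 4 → ℝ} (hQ : Q ∈ β)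
    (hPQ : minkowski (P - Q) F.a = 0) :
    (fun x => F.equiv.symm x + -F.equiv.symm P) '' β =
      {p | p 0 - p 1 = minkowski (P - Q) F.n ∧ p 2 = 0} := by
  rw [image_linearEquiv_add_neg_apply]
  ext p
  simp only [Set.mem_ofPred_eq, LinearEquiv.symm_symm, SetLike.mem_coe]
  rw [← AffineSubspace.vsub_right_mem_direction_iff_mem hQ, vsub_eq_sub, add_sub_assoc, hβ,
    mem_span_n_b_iff, minkowski_add_left, minkowski_add_left, F.equiv_apply, F.minkowski_toLin_n,
    F.minkowski_toLin_a, hPQ, add_zero]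
  exact and_congr ⟨fun h => by linarith, fun h => by linarith⟩ Iff.rfl

end NullFrame

lemma exists_nullFrame {n a b : Fin 4 → ℝ} (hn : n ≠ 0) (hnn : minkowski n n = 0)
    (haa : minkowski a a = 1) (hbb : minkowski b b = 1) (hab : minkowski a b = 0)
    (han : minkowski a n = 0) (hbn : minkowski b n = 0) :
    ∃ F : NullFrame, F.n = n ∧ F.a = a ∧ F.b = b := by
  have hn0 : n 0 ≠ 0 := fun h0 => hn (eq_zero_of_minkowski_self_eq_zero hnn h0)
  set m₀ : Fin 4 → ℝ := Pi.single 0 (2 / n 0)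
  have hm₀n : minkowski m₀ n = -2 := by
    simp [m₀, minkowski]
    field_simp
  -- Gram–Schmidt against `a`, `b`, then a multiple of `n` to make it null.
  set p := minkowski m₀ a
  set q := minkowski m₀ b
  set r := (minkowski m₀ m₀ - p ^ 2 - q ^ 2) / 4
  have hba : minkowski b a = 0 := minkowski_comm a b ▸ hab
  have hna : minkowski n a = 0 := minkowski_comm a n ▸ han
  have hnb : minkowski n b = 0 := minkowski_comm b n ▸ hbn
  have ham₀ : minkowski a m₀ = p := (minkowski_comm m₀ a).symm
  have hbm₀ : minkowski b m₀ = q := (minkowski_comm m₀ b).symm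
  have hnm₀ : minkowski n m₀ = -2 := minkowski_comm m₀ n ▸ hm₀n
  refine ⟨⟨n, m₀ - p • a - q • b + r • n, a, b, hnn, ?_, ?_, haa, hbb, hab, hna, hnb, ?_, ?_⟩,
    rfl, rfl, rfl⟩
  · simp only [minkowski_add_left, minkowski_add_right, minkowski_sub_left, minkowski_sub_right,
      minkowski_smul_left, minkowski_smul_right, haa, hbb, hab, hba, han, hna, hbn, hnb, hnn,
      ham₀, hbm₀, hm₀n, hnm₀]
    ring
  · simp [hnn, hna, hnb, hnm₀]
  · simp [p, haa, hba, hna]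
  · simp [q, hbb, hab, hnb]

lemma AffineSubspace.nonempty_of_finrank_direction_ne_zero {k V P : Type*} [DivisionRing k]
    [AddCommGroup V] [Module k V] [AddTorsor V P] {s : AffineSubspace k P}
    (h : Module.finrank k s.direction ≠ 0) : (s : Set P).Nonempty := by
  rw [AffineSubspace.nonempty_iff_ne_bot]
  rintro rfl
  rw [AffineSubspace.direction_bot, finrank_bot] at h
  exact h rfl

lemma exists_mem_minkowski_sub_eq_zero {α : AffineSubspace ℝ (Fin 4 → ℝ)}
    (hα : (α : Set (Fin 4 → ℝ)).Nonempty) {a : Fin 4 → ℝ} (ha : a ∈ α.direction)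
    (haa : minkowski a a = 1) (Q : Fin 4 → ℝ) : ∃ P ∈ α, minkowski (P - Q) a = 0 := by
  obtain ⟨P₀, hP₀⟩ := hα
  refine ⟨minkowski (Q - P₀) a • a + P₀,
    AffineSubspace.vadd_mem_of_mem_direction (Submodule.smul_mem _ _ ha) hP₀, ?_⟩
  simp [haa]

theorem stmt_8 (α β : AffineSubspace ℝ (Fin 4 → ℝ))
    (hα2 : Module.finrank ℝ α.direction = 2)
    (hβ2 : Module.finrank ℝ β.direction = 2)
    (horth : ∀ u ∈ α.direction, ∀ v ∈ β.direction, minkowski u v = 0)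
    (hαnt : ∀ u ∈ α.direction, ¬ minkowski u u < 0)
    (hβnt : ∀ v ∈ β.direction, ¬ minkowski v v < 0) :
    ∃ (Λ : (Fin 4 → ℝ) ≃ₗ[ℝ] (Fin 4 → ℝ)) (c : Fin 4 → ℝ) (s : ℝ),
      (∀ u v : Fin 4 → ℝ, minkowski (Λ u) (Λ v) = minkowski u v) ∧
      (fun x => Λ x + c) '' (α : Set (Fin 4 → ℝ)) =
        {p : Fin 4 → ℝ | p 0 - p 1 = 0 ∧ p 3 = 0} ∧
      (fun x => Λ x + c) '' (β : Set (Fin 4 → ℝ)) =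
        {p : Fin 4 → ℝ | p 0 - p 1 = s ∧ p 2 = 0} := by
  have horth_symm : ∀ v ∈ β.direction, ∀ u ∈ α.direction, minkowski v u = 0 :=
    fun v hv u hu => minkowski_comm u v ▸ horth u hu v hv
  obtain ⟨n, ⟨hnα, hnβ⟩, hn⟩ := Submodule.exists_ne_zero_mem_inf_of_sup_ne_top (by simp; omega)
    (sup_ne_top_of_minkowski_orthogonal horth hαnt hβnt)
  have hnn := horth n hnα n hnβ
  obtain ⟨a, haα, haa⟩ := exists_minkowski_self_eq_one (by omega) hn hnn
    (fun u hu => horth u hu n hnβ) hαnt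
  obtain ⟨b, hbβ, hbb⟩ := exists_minkowski_self_eq_one (by omega) hn hnn
    (fun v hv => horth_symm v hv n hnα) hβnt
  obtain ⟨F, rfl, rfl, rfl⟩ := exists_nullFrame hn hnn haa hbb (horth a haα b hbβ)
    (horth a haα _ hnβ) (horth_symm b hbβ _ hnα)
  have hα : α.direction = Submodule.span ℝ {F.n, F.a} :=
    le_antisymm (fun v hv => (F.mem_span_n_a_iff v).2 ⟨horth v hv _ hnβ, horth v hv _ hbβ⟩)
      (Submodule.span_le.2 (Set.pair_subset hnα haα))
  have hβ : β.direction = Submodule.span ℝ {F.n, F.b} :=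
    le_antisymm
      (fun v hv => (F.mem_span_n_b_iff v).2 ⟨horth_symm v hv _ hnα, horth_symm v hv _ haα⟩)
      (Submodule.span_le.2 (Set.pair_subset hnβ hbβ))
  obtain ⟨Q, hQ⟩ := AffineSubspace.nonempty_of_finrank_direction_ne_zero (hβ2 ▸ two_ne_zero)
  obtain ⟨P, hP, hPQ⟩ := exists_mem_minkowski_sub_eq_zero
    (AffineSubspace.nonempty_of_finrank_direction_ne_zero (hα2 ▸ two_ne_zero)) haα haa Q
  exact ⟨F.equiv.symm, -F.equiv.symm P, minkowski (P - Q) F.n, F.minkowski_equiv_symm,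
    F.image_of_direction_eq_span_n_a hα hP, F.image_of_direction_eq_span_n_b hβ hQ hPQ⟩
end

section
/- Let α, β be 2-dimensional linear subspaces of Minkowski ℝ⁴ with η(u, v) = 0 for all u ∈ α, v ∈ β. If neither α nor β contains a timelike vector, then each of α and β contains a nonzero null vector, and these null directions are collinear with each other. -/
/-!
Both planes meet in a nonzero vector `w`, which is null because it is orthogonal to itself;
`w` is then the common null direction. If they did not meet, dimension count would give
`α ⊕ β = ℝ⁴`, and for `x = y + z` with `y ∈ α`, `z ∈ β` orthogonality gives
`η(x, x) = η(y, y) + η(z, z) ≥ 0`, which fails for `x = e₀`.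
-/

theorem minkowski_add_self (y z : Fin 4 → ℝ) :
    minkowski (y + z) (y + z) = minkowski y y + 2 * minkowski y z + minkowski z z := by
  simp only [minkowski, Pi.add_apply]
  ring

theorem minkowski_single_zero_self : minkowski (Pi.single 0 1) (Pi.single 0 1) = -1 := by
  simp [minkowski]

theorem sup_ne_top_of_orthogonal_of_not_timelike {α β : Submodule ℝ (Fin 4 → ℝ)}
    (horth : ∀ u ∈ α, ∀ v ∈ β, minkowski u v = 0)
    (hαnt : ∀ u ∈ α, ¬ minkowski u u < 0)
    (hβnt : ∀ v ∈ β, ¬ minkowski v v < 0) :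
    α ⊔ β ≠ ⊤ := by
  intro htop
  obtain ⟨y, hy, z, hz, hyz⟩ :=
    Submodule.mem_sup.mp (htop ▸ Submodule.mem_top : (Pi.single 0 1 : Fin 4 → ℝ) ∈ α ⊔ β)
  have h := minkowski_single_zero_self
  rw [← hyz, minkowski_add_self, horth y hy z hz] at h
  linarith [not_lt.mp (hαnt y hy), not_lt.mp (hβnt z hz)]

theorem stmt_9 (α β : Submodule ℝ (Fin 4 → ℝ))
    (hα2 : Module.finrank ℝ α = 2)
    (hβ2 : Module.finrank ℝ β = 2)
    (horth : ∀ u ∈ α, ∀ v ∈ β, minkowski u v = 0)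
    (hαnt : ∀ u ∈ α, ¬ minkowski u u < 0)
    (hβnt : ∀ v ∈ β, ¬ minkowski v v < 0) :
    ∃ u ∈ α, ∃ v ∈ β, u ≠ 0 ∧ v ≠ 0 ∧
      minkowski u u = 0 ∧ minkowski v v = 0 ∧ ∃ l : ℝ, v = l • u := by
  have hdim : Module.finrank ℝ (Fin 4 → ℝ) ≤ Module.finrank ℝ α + Module.finrank ℝ β := by
    simp [hα2, hβ2]
  have hmeet : ¬ Disjoint α β := fun hdisj =>
    sup_ne_top_of_orthogonal_of_not_timelike horth hαnt hβnt
      (Submodule.eq_top_of_disjoint α β hdim hdisj)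
  obtain ⟨w, hwα, hwβ, hw⟩ : ∃ w ∈ α, w ∈ β ∧ w ≠ 0 := by
    simpa [Submodule.disjoint_def] using hmeet
  have hnull := horth w hwα w hwβ
  exact ⟨w, hwα, w, hwβ, hw, hw, hnull, hnull, 1, (one_smul ℝ w).symm⟩
end

section
/- Let points A, B, C, D, E, F, G, H ∈ ℝ⁴ satisfy the hypotheses: A, B, C are not collinear, E, F, G are not collinear, and the fifteen relations η(P-Q,P-Q)=0 hold for all P ∈ {A,B,C,D}, Q ∈ {E,F,G,H} except (D,H). Then the four points A, B, C, D lie in a common 2-dimensional affine plane, and the four points E, F, G, H lie in a common 2-dimensional affine plane, and every direction vector of the first plane is η-orthogonal to every direction vector of the second. -/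
lemma minkowski_comm_s16 (a b : Fin 4 → ℝ) : minkowski a b = minkowski b a := by
  simp only [minkowski]; ring

/-- The Minkowski form as a bilinear form. -/
noncomputable def mB : LinearMap.BilinForm ℝ (Fin 4 → ℝ) :=
  LinearMap.mk₂ ℝ minkowski
    (fun a a' b => by simp only [minkowski, Pi.add_apply]; ring)
    (fun r a b => by simp only [minkowski, Pi.smul_apply, smul_eq_mul]; ring)
    (fun a b b' => by simp only [minkowski, Pi.add_apply]; ring)
    (fun r a b => by simp only [minkowski, Pi.smul_apply, smul_eq_mul]; ring)

lemma mB_apply (a b : Fin 4 → ℝ) : mB a b = minkowski a b := rfl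

lemma mB_refl : mB.IsRefl := by
  intro x y h
  rwa [mB_apply, minkowski_comm_s16, ← mB_apply] at h

lemma mB_nondegenerate : mB.Nondegenerate := by
  refine (LinearMap.IsRefl.nondegenerate_iff_separatingLeft mB_refl).2 ?_
  intro x hx
  have h0 := hx ![1,0,0,0]
  have h1 := hx ![0,1,0,0]
  have h2 := hx ![0,0,1,0]
  have h3 := hx ![0,0,0,1]
  simp [mB_apply, minkowski] at h0 h1 h2 h3
  funext i
  fin_cases i <;> simp [h0, h1, h2, h3]

lemma rect {a b c d : Fin 4 → ℝ}
    (h1 : minkowski (a - c) (a - c) = 0) (h2 : minkowski (a - d) (a - d) = 0)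
    (h3 : minkowski (b - c) (b - c) = 0) (h4 : minkowski (b - d) (b - d) = 0) :
    minkowski (b - a) (d - c) = 0 := by
  simp only [minkowski, Pi.sub_apply] at *
  linear_combination (h2 + h3 - h1 - h4) / 2

lemma indep_of_not_collinear {P Q R : Fin 4 → ℝ}
    (h : ¬ Collinear ℝ ({P, Q, R} : Set (Fin 4 → ℝ))) :
    LinearIndependent ℝ ![Q - P, R - P] := by
  by_contra hdep
  apply h
  rw [linearIndependent_fin2] at hdep
  push_neg at hdep
  rw [collinear_iff_of_mem (Set.mem_insert P {Q, R})]
  simp only [Matrix.cons_val_one, Matrix.head_cons, Matrix.cons_val_zero] at hdep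
  by_cases hz : R - P = (0 : Fin 4 → ℝ)
  · have hRP : R = P := by rwa [sub_eq_zero] at hz
    refine ⟨Q - P, fun p hp => ?_⟩
    simp only [Set.mem_insert_iff, Set.mem_singleton_iff] at hp
    rcases hp with rfl | rfl | rfl
    · exact ⟨0, by simp⟩
    · exact ⟨1, by simp [vadd_eq_add]⟩
    · exact ⟨0, by simp [hRP]⟩
  · obtain ⟨a, ha⟩ := hdep hz
    refine ⟨R - P, fun p hp => ?_⟩
    simp only [Set.mem_insert_iff, Set.mem_singleton_iff] at hp
    rcases hp with rfl | rfl | rfl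
    · exact ⟨0, by simp⟩
    · exact ⟨a, by rw [vadd_eq_add, ha]; abel⟩
    · exact ⟨1, by simp [vadd_eq_add]⟩

lemma mem_orth_pair {v w x : Fin 4 → ℝ} (h1 : mB v x = 0) (h2 : mB w x = 0) :
    x ∈ mB.orthogonal (Submodule.span ℝ {v, w}) := by
  rw [LinearMap.BilinForm.mem_orthogonal_iff]
  intro n hn
  induction hn using Submodule.span_induction with
  | mem y hy =>
    rcases hy with rfl | rfl
    · exact h1
    · exact h2
  | zero => simp [LinearMap.BilinForm.IsOrtho]
  | add y z _ _ hy hz =>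
    simp only [LinearMap.BilinForm.IsOrtho, map_add, LinearMap.add_apply] at *
    rw [hy, hz, add_zero]
  | smul t y _ hy =>
    simp only [LinearMap.BilinForm.IsOrtho, map_smul, LinearMap.smul_apply, smul_eq_mul] at *
    rw [hy, mul_zero]

lemma finrank_span_pair {u v : Fin 4 → ℝ} (h : LinearIndependent ℝ ![u, v]) :
    Module.finrank ℝ (Submodule.span ℝ ({u, v} : Set (Fin 4 → ℝ))) = 2 := by
  have := finrank_span_eq_card h
  have hr : Set.range ![u, v] = {u, v} := by
    simp [Matrix.range_cons, Matrix.range_empty, Set.pair_comm]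
  rw [hr] at this
  simpa using this

theorem stmt_16 (A B C D E F G H : Fin 4 → ℝ)
    (hABC : ¬ Collinear ℝ ({A, B, C} : Set (Fin 4 → ℝ)))
    (hEFG : ¬ Collinear ℝ ({E, F, G} : Set (Fin 4 → ℝ)))
    (hAE : minkowski (A - E) (A - E) = 0)
    (hAF : minkowski (A - F) (A - F) = 0)
    (hAG : minkowski (A - G) (A - G) = 0)
    (hAH : minkowski (A - H) (A - H) = 0)
    (hBE : minkowski (B - E) (B - E) = 0)
    (hBF : minkowski (B - F) (B - F) = 0)
    (hBG : minkowski (B - G) (B - G) = 0)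
    (hBH : minkowski (B - H) (B - H) = 0)
    (hCE : minkowski (C - E) (C - E) = 0)
    (hCF : minkowski (C - F) (C - F) = 0)
    (hCG : minkowski (C - G) (C - G) = 0)
    (hCH : minkowski (C - H) (C - H) = 0)
    (hDE : minkowski (D - E) (D - E) = 0)
    (hDF : minkowski (D - F) (D - F) = 0)
    (hDG : minkowski (D - G) (D - G) = 0) :
    ∃ (W W' : AffineSubspace ℝ (Fin 4 → ℝ)),
      Module.finrank ℝ W.direction = 2 ∧
      Module.finrank ℝ W'.direction = 2 ∧
      A ∈ W ∧ B ∈ W ∧ C ∈ W ∧ D ∈ W ∧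
      E ∈ W' ∧ F ∈ W' ∧ G ∈ W' ∧ H ∈ W' ∧
      ∀ u ∈ W.direction, ∀ v ∈ W'.direction, minkowski u v = 0 := by
  -- direction vectors
  set u1 := B - A with hu1
  set u2 := C - A with hu2
  set u3 := D - A with hu3
  set v1 := F - E with hv1
  set v2 := G - E with hv2
  set v3 := H - E with hv3
  -- orthogonality relations
  have o11 : minkowski u1 v1 = 0 := rect hAE hAF hBE hBF
  have o12 : minkowski u1 v2 = 0 := rect hAE hAG hBE hBG
  have o13 : minkowski u1 v3 = 0 := rect hAE hAH hBE hBH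
  have o21 : minkowski u2 v1 = 0 := rect hAE hAF hCE hCF
  have o22 : minkowski u2 v2 = 0 := rect hAE hAG hCE hCG
  have o23 : minkowski u2 v3 = 0 := rect hAE hAH hCE hCH
  have o31 : minkowski u3 v1 = 0 := rect hAE hAF hDE hDF
  have o32 : minkowski u3 v2 = 0 := rect hAE hAG hDE hDG
  -- linear independence
  have hU : LinearIndependent ℝ ![u1, u2] := indep_of_not_collinear hABC
  have hV : LinearIndependent ℝ ![v1, v2] := indep_of_not_collinear hEFG
  set U₀ : Submodule ℝ (Fin 4 → ℝ) := Submodule.span ℝ {u1, u2} with hU₀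
  set V₀ : Submodule ℝ (Fin 4 → ℝ) := Submodule.span ℝ {v1, v2} with hV₀
  have frU : Module.finrank ℝ U₀ = 2 := finrank_span_pair hU
  have frV : Module.finrank ℝ V₀ = 2 := finrank_span_pair hV
  have fr4 : Module.finrank ℝ (Fin 4 → ℝ) = 4 := by simp
  -- U₀ equals the orthogonal complement of V₀
  have frOV : Module.finrank ℝ (mB.orthogonal V₀) = 2 := by
    rw [LinearMap.BilinForm.finrank_orthogonal mB_nondegenerate, frV, fr4]
  have hUle : U₀ ≤ mB.orthogonal V₀ := by
    rw [hU₀, Submodule.span_le]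
    rintro x (rfl | rfl)
    · exact mem_orth_pair (by rw [mB_apply, minkowski_comm_s16]; exact o11)
        (by rw [mB_apply, minkowski_comm_s16]; exact o12)
    · exact mem_orth_pair (by rw [mB_apply, minkowski_comm_s16]; exact o21)
        (by rw [mB_apply, minkowski_comm_s16]; exact o22)
  have hUeq : U₀ = mB.orthogonal V₀ :=
    Submodule.eq_of_le_of_finrank_le hUle (by rw [frU, frOV])
  have frOU : Module.finrank ℝ (mB.orthogonal U₀) = 2 := by
    rw [LinearMap.BilinForm.finrank_orthogonal mB_nondegenerate, frU, fr4]
  have hVle : V₀ ≤ mB.orthogonal U₀ := by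
    rw [hV₀, Submodule.span_le]
    rintro x (rfl | rfl)
    · exact mem_orth_pair (by rw [mB_apply]; exact o11) (by rw [mB_apply]; exact o21)
    · exact mem_orth_pair (by rw [mB_apply]; exact o12) (by rw [mB_apply]; exact o22)
  have hVeq : V₀ = mB.orthogonal U₀ :=
    Submodule.eq_of_le_of_finrank_le hVle (by rw [frV, frOU])
  -- the extra points lie in the spans
  have hu3mem : u3 ∈ U₀ := by
    rw [hUeq]
    exact mem_orth_pair (by rw [mB_apply, minkowski_comm_s16]; exact o31)
      (by rw [mB_apply, minkowski_comm_s16]; exact o32)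
  have hv3mem : v3 ∈ V₀ := by
    rw [hVeq]
    exact mem_orth_pair (by rw [mB_apply]; exact o13) (by rw [mB_apply]; exact o23)
  -- construct the affine subspaces
  refine ⟨AffineSubspace.mk' A U₀, AffineSubspace.mk' E V₀, ?_, ?_, ?_, ?_, ?_, ?_, ?_, ?_, ?_, ?_, ?_⟩
  · rw [AffineSubspace.direction_mk']; exact frU
  · rw [AffineSubspace.direction_mk']; exact frV
  · exact AffineSubspace.self_mem_mk' A U₀
  · rw [AffineSubspace.mem_mk', vsub_eq_sub, ← hu1]
    exact Submodule.subset_span (Set.mem_insert _ _)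
  · rw [AffineSubspace.mem_mk', vsub_eq_sub, ← hu2]
    exact Submodule.subset_span (Set.mem_insert_of_mem _ rfl)
  · rw [AffineSubspace.mem_mk', vsub_eq_sub, ← hu3]
    exact hu3mem
  · exact AffineSubspace.self_mem_mk' E V₀
  · rw [AffineSubspace.mem_mk', vsub_eq_sub, ← hv1]
    exact Submodule.subset_span (Set.mem_insert _ _)
  · rw [AffineSubspace.mem_mk', vsub_eq_sub, ← hv2]
    exact Submodule.subset_span (Set.mem_insert_of_mem _ rfl)
  · rw [AffineSubspace.mem_mk', vsub_eq_sub, ← hv3]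
    exact hv3mem
  · intro u hu v hv
    rw [AffineSubspace.direction_mk'] at hu hv
    rw [hVeq] at hv
    have := hv u hu
    change mB u v = 0 at this; rw [mB_apply] at this
    exact this
end
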